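/- arXiv:1501.04867 — 2 statements merged into one kernel-verified Lean document; each statement's English description precedes it below -/
import Mathlib

section
/- Let (A,X,Y) be jointly distributed random variables with finite ranges. If H(A | X,Y) = 0 and condition (B) holds (for all a, x, y: p(a,x) > 0 and p(a,y) > 0 imply p(a,x,y) > 0), then condition (C) holds: for all a, a', x, y, if p(a,x), p(a,y), p(a',x), p(a',y) are all positive, then a = a'. -/
/-! `H(A | X,Y) = ∑ p(a,x,y) (log p(x,y) - log p(a,x,y))` is a sum of nonnegative terms, since
`p(a,x,y) ≤ p(x,y)`. So it vanishes only if `p(a,x,y) = p(x,y)` whenever `p(a,x,y) > 0`, i.e. at most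
one `a` is compatible with a given `(x,y)`. Condition (B) makes both `a` and `a'` compatible with `(x,y)`. -/

open Finset

noncomputable section

/-- Probability of an event under a distribution on a finite sample space. -/
def pr {Ω : Type*} [Fintype Ω] (p : Ω → ℝ) (E : Set Ω) : ℝ :=
  ∑ ω, E.indicator p ω

/-- `p` is a probability mass function on the finite sample space `Ω`. -/
def IsPMF {Ω : Type*} [Fintype Ω] (p : Ω → ℝ) : Prop :=
  (∀ ω, 0 ≤ p ω) ∧ ∑ ω, p ω = 1

/-- Shannon entropy (base 2) of a random variable `V` on a finite sample space. -/
def ent {Ω β : Type*} [Fintype Ω] [Fintype β] (p : Ω → ℝ) (V : Ω → β) : ℝ :=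
  -∑ v, pr p {ω | V ω = v} * Real.logb 2 (pr p {ω | V ω = v})

/-- Conditional Shannon entropy (base 2): `H(V | W)`. -/
def condEnt {Ω β γ : Type*} [Fintype Ω] [Fintype β] [Fintype γ]
    (p : Ω → ℝ) (V : Ω → β) (W : Ω → γ) : ℝ :=
  ent p (fun ω => (V ω, W ω)) - ent p W

/-- Mutual information (base 2): `I(V : W)`. -/
def mi {Ω β γ : Type*} [Fintype Ω] [Fintype β] [Fintype γ]
    (p : Ω → ℝ) (V : Ω → β) (W : Ω → γ) : ℝ :=
  ent p V + ent p W - ent p (fun ω => (V ω, W ω))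

/-- Conditional mutual information (base 2): `I(V : W | U)`. -/
def cmi {Ω β γ δ : Type*} [Fintype Ω] [Fintype β] [Fintype γ] [Fintype δ]
    (p : Ω → ℝ) (V : Ω → β) (W : Ω → γ) (U : Ω → δ) : ℝ :=
  ent p (fun ω => (V ω, U ω)) + ent p (fun ω => (W ω, U ω))
    - ent p (fun ω => (V ω, W ω, U ω)) - ent p U

end

section

variable {Ω β γ : Type*} [Fintype Ω] [Fintype β] {p : Ω → ℝ}

lemma pr_nonneg (hp : ∀ ω, 0 ≤ p ω) (E : Set Ω) : 0 ≤ pr p E :=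
  sum_nonneg fun ω _ => Set.indicator_nonneg (fun ω _ => hp ω) ω

lemma pr_mono (hp : ∀ ω, 0 ≤ p ω) {E F : Set Ω} (h : E ⊆ F) : pr p E ≤ pr p F :=
  sum_le_sum fun ω _ => Set.indicator_le_indicator_of_subset h hp ω

lemma pr_eq_sum_pr_prod (p : Ω → ℝ) (V : Ω → β) (W : Ω → γ) (c : γ) :
    pr p {ω | W ω = c} = ∑ b, pr p {ω | (V ω, W ω) = (b, c)} := by
  classical
  unfold pr
  rw [sum_comm]
  refine sum_congr rfl fun ω _ => ?_
  have hfiber : ∀ b, {ω | (V ω, W ω) = (b, c)}.indicator p ω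
      = if V ω = b then {ω | W ω = c}.indicator p ω else 0 := by
    intro b
    by_cases hb : V ω = b <;> simp [Set.indicator_apply, hb]
  simp only [hfiber, sum_ite_eq, mem_univ, if_true]

lemma condEnt_eq_sum [Fintype γ] (p : Ω → ℝ) (V : Ω → β) (W : Ω → γ) :
    condEnt p V W = ∑ w : β × γ, pr p {ω | (V ω, W ω) = w} *
      (Real.logb 2 (pr p {ω | W ω = w.2}) - Real.logb 2 (pr p {ω | (V ω, W ω) = w})) := by
  have hmarg : ∑ w : β × γ, pr p {ω | (V ω, W ω) = w} * Real.logb 2 (pr p {ω | W ω = w.2})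
      = ∑ c, pr p {ω | W ω = c} * Real.logb 2 (pr p {ω | W ω = c}) := by
    rw [Fintype.sum_prod_type_right]
    exact sum_congr rfl fun c _ => by nth_rw 1 [pr_eq_sum_pr_prod p V W c]; rw [sum_mul]
  simp only [condEnt, ent, mul_sub, sum_sub_distrib, hmarg]
  ring

end

lemma mul_logb_sub_nonneg {b r q : ℝ} (hb : 1 < b) (hr : 0 ≤ r) (hrq : r ≤ q) :
    0 ≤ r * (Real.logb b q - Real.logb b r) := by
  rcases hr.eq_or_lt with rfl | hr
  · simp
  · exact mul_nonneg hr.le (sub_nonneg.2 (Real.logb_le_logb_of_le hb hr hrq))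

lemma eq_of_mul_logb_sub_eq_zero {b r q : ℝ} (hb : 1 < b) (hr : 0 < r) (hrq : r ≤ q)
    (h : r * (Real.logb b q - Real.logb b r) = 0) : r = q := by
  rcases hrq.eq_or_lt with h' | hlt
  · exact h'
  · have := Real.logb_lt_logb hb hr hlt
    nlinarith

section

variable {Ω β γ : Type*} [Fintype Ω] [Fintype β] [Fintype γ] {p : Ω → ℝ}

lemma pr_prod_eq_pr_of_condEnt_eq_zero (hp : ∀ ω, 0 ≤ p ω) {V : Ω → β} {W : Ω → γ}
    (h : condEnt p V W = 0) {w : β × γ} (hw : 0 < pr p {ω | (V ω, W ω) = w}) :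
    pr p {ω | (V ω, W ω) = w} = pr p {ω | W ω = w.2} := by
  have hle : ∀ w : β × γ, pr p {ω | (V ω, W ω) = w} ≤ pr p {ω | W ω = w.2} :=
    fun w => pr_mono hp fun ω hω => congrArg Prod.snd hω
  rw [condEnt_eq_sum, sum_eq_zero_iff_of_nonneg fun w _ =>
    mul_logb_sub_nonneg one_lt_two (pr_nonneg hp _) (hle w)] at h
  exact eq_of_mul_logb_sub_eq_zero one_lt_two hw (hle w) (h w (mem_univ w))

lemma eq_of_condEnt_eq_zero (hp : ∀ ω, 0 ≤ p ω) {V : Ω → β} {W : Ω → γ}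
    (h : condEnt p V W = 0) {b b' : β} {c : γ}
    (hb : 0 < pr p {ω | (V ω, W ω) = (b, c)}) (hb' : 0 < pr p {ω | (V ω, W ω) = (b', c)}) :
    b = b' := by
  classical
  by_contra hne
  have hsum : pr p {ω | (V ω, W ω) = (b, c)} + pr p {ω | (V ω, W ω) = (b', c)}
      ≤ pr p {ω | W ω = c} := by
    rw [pr_eq_sum_pr_prod p V W c, ← sum_pair (f := fun b => pr p {ω | (V ω, W ω) = (b, c)}) hne]
    exact sum_le_sum_of_subset_of_nonneg (subset_univ _) fun _ _ _ => pr_nonneg hp _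
  have := pr_prod_eq_pr_of_condEnt_eq_zero hp h hb
  linarith

end

/-- Conditions (B) and `H(A | X,Y) = 0` together imply condition (C). -/
theorem stmt_2 {Ω α χ υ : Type*} [Fintype Ω] [Fintype α] [Fintype χ] [Fintype υ]
    (p : Ω → ℝ) (hp : IsPMF p) (A : Ω → α) (X : Ω → χ) (Y : Ω → υ)
    (h0 : condEnt p A (fun ω => (X ω, Y ω)) = 0)
    (hB : ∀ (a : α) (x : χ) (y : υ),
      0 < pr p {ω | A ω = a ∧ X ω = x} →
      0 < pr p {ω | A ω = a ∧ Y ω = y} →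
      0 < pr p {ω | A ω = a ∧ X ω = x ∧ Y ω = y}) :
    ∀ (a a' : α) (x : χ) (y : υ),
      0 < pr p {ω | A ω = a ∧ X ω = x} →
      0 < pr p {ω | A ω = a ∧ Y ω = y} →
      0 < pr p {ω | A ω = a' ∧ X ω = x} →
      0 < pr p {ω | A ω = a' ∧ Y ω = y} → a = a' := by
  intro a a' x y hax hay ha'x ha'y
  have hjoint : ∀ b : α, {ω | A ω = b ∧ X ω = x ∧ Y ω = y}
      = {ω | (A ω, (X ω, Y ω)) = (b, (x, y))} := fun b => by
    ext; simp
  refine eq_of_condEnt_eq_zero (c := (x, y)) hp.1 h0 ?_ ?_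
  · rw [← hjoint]; exact hB a x y hax hay
  · rw [← hjoint]; exact hB a' x y ha'x ha'y
end

section
/- Let A, B, X, Y be jointly distributed random variables with finite ranges. If the triple (A,X,Y) satisfies condition (C) (for all a, a', x, y: if p(a,x), p(a,y), p(a',x), p(a',y) are all positive then a = a'), then H(A | B,X) + H(A | B,Y) ≤ H(A | B). -/
open Finset

lemma gibbs {ι : Type*} [Fintype ι] (a b : ι → ℝ) (ha : ∀ i, 0 ≤ a i) (hb : ∀ i, 0 ≤ b i)
    (hab : ∀ i, 0 < a i → 0 < b i) (hsum : ∑ i, b i ≤ ∑ i, a i) :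
    ∑ i, a i * Real.logb 2 (b i / a i) ≤ 0 := by
  have h2 : (0:ℝ) < Real.log 2 := Real.log_pos one_lt_two
  have key : ∑ i, a i * Real.log (b i / a i) ≤ 0 := by
    calc ∑ i, a i * Real.log (b i / a i) ≤ ∑ i, (b i - a i) := by
          apply Finset.sum_le_sum
          intro i _
          rcases eq_or_lt_of_le (ha i) with h | h
          · simp [← h, hb i]
          · have hbi := hab i h
            have hl := Real.log_le_sub_one_of_pos (div_pos hbi h)
            calc a i * Real.log (b i / a i) ≤ a i * (b i / a i - 1) :=
                  mul_le_mul_of_nonneg_left hl h.le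
              _ = b i - a i := by field_simp
      _ ≤ 0 := by rw [Finset.sum_sub_distrib]; linarith
  have heq : ∑ i, a i * Real.logb 2 (b i / a i)
      = (∑ i, a i * Real.log (b i / a i)) / Real.log 2 := by
    rw [Finset.sum_div]
    refine Finset.sum_congr rfl fun i _ => ?_
    rw [Real.logb, mul_div_assoc]
  rw [heq]
  exact div_nonpos_of_nonpos_of_nonneg key h2.le

lemma sum_ite_le_of_subsingleton {α : Type*} [Fintype α] (P : α → Prop) [DecidablePred P]
    (hP : ∀ a a', P a → P a' → a = a') (c : ℝ) (hc : 0 ≤ c) :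
    ∑ a, (if P a then c else 0) ≤ c := by
  classical
  rw [← Finset.sum_filter, Finset.sum_const, nsmul_eq_mul]
  have hcard : (Finset.univ.filter P).card ≤ 1 :=
    Finset.card_le_one.mpr fun a ha b hb =>
      hP a b (Finset.mem_filter.mp ha).2 (Finset.mem_filter.mp hb).2
  calc ((Finset.univ.filter P).card : ℝ) * c ≤ 1 * c := by
        apply mul_le_mul_of_nonneg_right _ hc; exact_mod_cast hcard
    _ = c := one_mul c

lemma key_ineq {α β χ υ : Type*} [Fintype α] [Fintype β] [Fintype χ] [Fintype υ]
    (f : α → β → χ → ℝ) (g : α → β → υ → ℝ)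
    (pAB : α → β → ℝ) (pBX : β → χ → ℝ) (pBY : β → υ → ℝ) (pB : β → ℝ)
    (pAX : α → χ → ℝ) (pAY : α → υ → ℝ)
    (hf : ∀ a b x, 0 ≤ f a b x) (hg : ∀ a b y, 0 ≤ g a b y)
    (hpABf : ∀ a b, pAB a b = ∑ x, f a b x)
    (hpABg : ∀ a b, pAB a b = ∑ y, g a b y)
    (hpBX : ∀ b x, pBX b x = ∑ a, f a b x)
    (hpBY : ∀ b y, pBY b y = ∑ a, g a b y)
    (hpB : ∀ b, pB b = ∑ a, pAB a b)
    (hpAX : ∀ a x, pAX a x = ∑ b, f a b x)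
    (hpAY : ∀ a y, pAY a y = ∑ b, g a b y)
    (hC : ∀ a a' x y, 0 < pAX a x → 0 < pAY a y → 0 < pAX a' x → 0 < pAY a' y → a = a') :
    (∑ b, ∑ x, pBX b x * Real.logb 2 (pBX b x)) +
    (∑ b, ∑ y, pBY b y * Real.logb 2 (pBY b y)) +
    (∑ a, ∑ b, pAB a b * Real.logb 2 (pAB a b)) ≤
    (∑ b, pB b * Real.logb 2 (pB b)) +
    (∑ a, ∑ b, ∑ x, f a b x * Real.logb 2 (f a b x)) +
    (∑ a, ∑ b, ∑ y, g a b y * Real.logb 2 (g a b y)) := by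
  classical
  have hABnn : ∀ a b, 0 ≤ pAB a b := fun a b => by
    rw [hpABf]; exact Finset.sum_nonneg fun x _ => hf a b x
  have hBXnn : ∀ b x, 0 ≤ pBX b x := fun b x => by
    rw [hpBX]; exact Finset.sum_nonneg fun a _ => hf a b x
  have hBYnn : ∀ b y, 0 ≤ pBY b y := fun b y => by
    rw [hpBY]; exact Finset.sum_nonneg fun a _ => hg a b y
  have hBnn : ∀ b, 0 ≤ pB b := fun b => by
    rw [hpB]; exact Finset.sum_nonneg fun a _ => hABnn a b
  have hfAB : ∀ a b x, f a b x ≤ pAB a b := fun a b x => by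
    rw [hpABf]; exact Finset.single_le_sum (fun x _ => hf a b x) (Finset.mem_univ x)
  have hfBX : ∀ a b x, f a b x ≤ pBX b x := fun a b x => by
    rw [hpBX]; exact Finset.single_le_sum (fun a _ => hf a b x) (Finset.mem_univ a)
  have hgBY : ∀ a b y, g a b y ≤ pBY b y := fun a b y => by
    rw [hpBY]; exact Finset.single_le_sum (fun a _ => hg a b y) (Finset.mem_univ a)
  have hgAB : ∀ a b y, g a b y ≤ pAB a b := fun a b y => by
    rw [hpABg]; exact Finset.single_le_sum (fun y _ => hg a b y) (Finset.mem_univ y)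
  have hfAX : ∀ a b x, f a b x ≤ pAX a x := fun a b x => by
    rw [hpAX]; exact Finset.single_le_sum (fun b _ => hf a b x) (Finset.mem_univ b)
  have hgAY : ∀ a b y, g a b y ≤ pAY a y := fun a b y => by
    rw [hpAY]; exact Finset.single_le_sum (fun b _ => hg a b y) (Finset.mem_univ b)
  have hABB : ∀ a b, pAB a b ≤ pB b := fun a b => by
    rw [hpB]; exact Finset.single_le_sum (fun a _ => hABnn a b) (Finset.mem_univ a)
  set Q : α → β → χ → υ → ℝ :=
    fun a b x y => if 0 < pAB a b then f a b x * g a b y / pAB a b else 0 with hQdef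
  set G : α → β → χ → υ → ℝ :=
    fun a b x y => if 0 < pAX a x ∧ 0 < pAY a y then
      (if 0 < pB b then pBX b x * pBY b y / pB b else 0) else 0 with hGdef
  have hQnn : ∀ a b x y, 0 ≤ Q a b x y := by
    intro a b x y
    rw [hQdef]; dsimp only
    split_ifs with h
    · exact div_nonneg (mul_nonneg (hf a b x) (hg a b y)) (hABnn a b)
    · exact le_refl 0
  have hGnn : ∀ a b x y, 0 ≤ G a b x y := by
    intro a b x y
    rw [hGdef]; dsimp only
    split_ifs with h1 h2
    · exact div_nonneg (mul_nonneg (hBXnn b x) (hBYnn b y)) (hBnn b)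
    · exact le_refl 0
    · exact le_refl 0
  have hQy : ∀ a b x, ∑ y, Q a b x y = f a b x := by
    intro a b x
    rw [hQdef]; dsimp only
    by_cases h : 0 < pAB a b
    · simp only [if_pos h]
      rw [← Finset.sum_div, ← Finset.mul_sum, ← hpABg]
      field_simp
    · simp only [if_neg h]
      have h0 : pAB a b = 0 := le_antisymm (not_lt.mp h) (hABnn a b)
      have hf0 : f a b x = 0 := le_antisymm (h0 ▸ hfAB a b x) (hf a b x)
      simp [hf0]
  have hQx : ∀ a b y, ∑ x, Q a b x y = g a b y := by
    intro a b y
    rw [hQdef]; dsimp only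
    by_cases h : 0 < pAB a b
    · simp only [if_pos h]
      rw [← Finset.sum_div, ← Finset.sum_mul, ← hpABf]
      field_simp
    · simp only [if_neg h]
      have h0 : pAB a b = 0 := le_antisymm (not_lt.mp h) (hABnn a b)
      have hg0 : g a b y = 0 := le_antisymm (h0 ▸ hgAB a b y) (hg a b y)
      simp [hg0]
  have hQxy : ∀ a b, ∑ x, ∑ y, Q a b x y = pAB a b := by
    intro a b
    simp only [hQy]
    exact (hpABf a b).symm
  have hQpos : ∀ a b x y, 0 < Q a b x y →
      0 < f a b x ∧ 0 < g a b y ∧ 0 < pAB a b := by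
    intro a b x y h
    rw [hQdef] at h; dsimp only at h
    by_cases hab : 0 < pAB a b
    · rw [if_pos hab] at h
      have hm : 0 < f a b x * g a b y := by
        have h2 := mul_pos h hab
        rwa [div_mul_cancel₀ _ (ne_of_gt hab)] at h2
      have hf1 : 0 < f a b x := by
        rcases (hf a b x).lt_or_eq with h' | h'
        · exact h'
        · rw [← h'] at hm; simp at hm
      have hg1 : 0 < g a b y := by
        rcases (hg a b y).lt_or_eq with h' | h'
        · exact h'
        · rw [← h'] at hm; simp at hm
      exact ⟨hf1, hg1, hab⟩
    · rw [if_neg hab] at h; exact absurd h (lt_irrefl 0)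
  have hQG : ∀ a b x y, 0 < Q a b x y → 0 < G a b x y := by
    intro a b x y h
    obtain ⟨h1, h2, h3⟩ := hQpos a b x y h
    have hax : 0 < pAX a x := lt_of_lt_of_le h1 (hfAX a b x)
    have hay : 0 < pAY a y := lt_of_lt_of_le h2 (hgAY a b y)
    have hbb : 0 < pB b := lt_of_lt_of_le h3 (hABB a b)
    have hbx : 0 < pBX b x := lt_of_lt_of_le h1 (hfBX a b x)
    have hby : 0 < pBY b y := lt_of_lt_of_le h2 (hgBY a b y)
    rw [hGdef]; dsimp only
    rw [if_pos ⟨hax, hay⟩, if_pos hbb]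
    positivity
  have hBXB : ∀ b, ∑ x, pBX b x = pB b := by
    intro b
    simp only [hpBX]
    rw [Finset.sum_comm, hpB]
    exact Finset.sum_congr rfl fun a _ => (hpABf a b).symm
  have hBYB : ∀ b, ∑ y, pBY b y = pB b := by
    intro b
    simp only [hpBY]
    rw [Finset.sum_comm, hpB]
    exact Finset.sum_congr rfl fun a _ => (hpABg a b).symm
  have hQtot : ∑ a, ∑ b, ∑ x, ∑ y, Q a b x y = ∑ b, pB b := by
    simp only [hQxy]
    rw [Finset.sum_comm]
    exact Finset.sum_congr rfl fun b _ => (hpB b).symm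
  have hGtot : ∑ a, ∑ b, ∑ x, ∑ y, G a b x y ≤ ∑ b, pB b := by
    have hstep1 : ∀ b x y, ∑ a, G a b x y ≤
        (if 0 < pB b then pBX b x * pBY b y / pB b else 0) := by
      intro b x y
      rw [hGdef]; dsimp only
      apply sum_ite_le_of_subsingleton
      · intro a a' ha ha'
        exact hC a a' x y ha.1 ha.2 ha'.1 ha'.2
      · split_ifs with h
        · exact div_nonneg (mul_nonneg (hBXnn b x) (hBYnn b y)) (hBnn b)
        · exact le_refl 0
    calc ∑ a, ∑ b, ∑ x, ∑ y, G a b x y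
        = ∑ b, ∑ x, ∑ y, ∑ a, G a b x y := by
          rw [Finset.sum_comm]
          refine Finset.sum_congr rfl fun b _ => ?_
          rw [Finset.sum_comm]
          refine Finset.sum_congr rfl fun x _ => ?_
          rw [Finset.sum_comm]
      _ ≤ ∑ b, ∑ x, ∑ y, (if 0 < pB b then pBX b x * pBY b y / pB b else 0) := by
          refine Finset.sum_le_sum fun b _ => ?_
          refine Finset.sum_le_sum fun x _ => ?_
          refine Finset.sum_le_sum fun y _ => hstep1 b x y
      _ ≤ ∑ b, pB b := by
          refine Finset.sum_le_sum fun b _ => ?_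
          by_cases h : 0 < pB b
          · simp only [if_pos h]
            have e1 : ∑ x, ∑ y, pBX b x * pBY b y / pB b
                = (∑ x, pBX b x) * (∑ y, pBY b y) / pB b := by
              rw [Finset.sum_mul_sum]
              simp only [div_eq_mul_inv, ← Finset.sum_mul]
            rw [e1, hBXB, hBYB]
            rw [mul_div_assoc, div_self (ne_of_gt h), mul_one]
          · simp only [if_neg h]
            simp [hBnn b]
  -- pointwise identity
  have hpt : ∀ a b x y, Q a b x y * Real.logb 2 (G a b x y / Q a b x y) =
      Q a b x y * Real.logb 2 (pBX b x) + Q a b x y * Real.logb 2 (pBY b y)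
      - Q a b x y * Real.logb 2 (pB b) - Q a b x y * Real.logb 2 (f a b x)
      - Q a b x y * Real.logb 2 (g a b y) + Q a b x y * Real.logb 2 (pAB a b) := by
    intro a b x y
    rcases (hQnn a b x y).lt_or_eq with h | h
    · obtain ⟨h1, h2, h3⟩ := hQpos a b x y h
      have hax : 0 < pAX a x := lt_of_lt_of_le h1 (hfAX a b x)
      have hay : 0 < pAY a y := lt_of_lt_of_le h2 (hgAY a b y)
      have hbb : 0 < pB b := lt_of_lt_of_le h3 (hABB a b)
      have hbx : 0 < pBX b x := lt_of_lt_of_le h1 (hfBX a b x)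
      have hby : 0 < pBY b y := lt_of_lt_of_le h2 (hgBY a b y)
      have hG0 : 0 < G a b x y := hQG a b x y h
      have hQQ : Q a b x y = f a b x * g a b y / pAB a b := by
        rw [hQdef]; dsimp only; rw [if_pos h3]
      have hGG : G a b x y = pBX b x * pBY b y / pB b := by
        rw [hGdef]; dsimp only; rw [if_pos ⟨hax, hay⟩, if_pos hbb]
      have hlog : Real.logb 2 (G a b x y / Q a b x y) =
          (Real.logb 2 (pBX b x) + Real.logb 2 (pBY b y) - Real.logb 2 (pB b))
          - (Real.logb 2 (f a b x) + Real.logb 2 (g a b y) - Real.logb 2 (pAB a b)) := by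
        rw [Real.logb_div (ne_of_gt hG0) (ne_of_gt h), hGG, hQQ,
          Real.logb_div (by positivity) (ne_of_gt hbb),
          Real.logb_div (by positivity) (ne_of_gt h3),
          Real.logb_mul (ne_of_gt hbx) (ne_of_gt hby),
          Real.logb_mul (ne_of_gt h1) (ne_of_gt h2)]
      rw [hlog]; ring
    · rw [← h]; ring
  -- the six sum evaluations
  have E1 : ∑ a, ∑ b, ∑ x, ∑ y, Q a b x y * Real.logb 2 (pBX b x)
      = ∑ b, ∑ x, pBX b x * Real.logb 2 (pBX b x) := by
    calc ∑ a, ∑ b, ∑ x, ∑ y, Q a b x y * Real.logb 2 (pBX b x)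
        = ∑ a, ∑ b, ∑ x, f a b x * Real.logb 2 (pBX b x) := by
          refine Finset.sum_congr rfl fun a _ => Finset.sum_congr rfl fun b _ =>
            Finset.sum_congr rfl fun x _ => ?_
          rw [← Finset.sum_mul, hQy]
      _ = ∑ b, ∑ x, (∑ a, f a b x) * Real.logb 2 (pBX b x) := by
          rw [Finset.sum_comm]
          refine Finset.sum_congr rfl fun b _ => ?_
          rw [Finset.sum_comm]
          exact Finset.sum_congr rfl fun x _ => (Finset.sum_mul _ _ _).symm
      _ = ∑ b, ∑ x, pBX b x * Real.logb 2 (pBX b x) := by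
          refine Finset.sum_congr rfl fun b _ => Finset.sum_congr rfl fun x _ => ?_
          rw [← hpBX]
  have E2 : ∑ a, ∑ b, ∑ x, ∑ y, Q a b x y * Real.logb 2 (pBY b y)
      = ∑ b, ∑ y, pBY b y * Real.logb 2 (pBY b y) := by
    calc ∑ a, ∑ b, ∑ x, ∑ y, Q a b x y * Real.logb 2 (pBY b y)
        = ∑ a, ∑ b, ∑ y, g a b y * Real.logb 2 (pBY b y) := by
          refine Finset.sum_congr rfl fun a _ => Finset.sum_congr rfl fun b _ => ?_
          rw [Finset.sum_comm]
          refine Finset.sum_congr rfl fun y _ => ?_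
          rw [← Finset.sum_mul, hQx]
      _ = ∑ b, ∑ y, (∑ a, g a b y) * Real.logb 2 (pBY b y) := by
          rw [Finset.sum_comm]
          refine Finset.sum_congr rfl fun b _ => ?_
          rw [Finset.sum_comm]
          exact Finset.sum_congr rfl fun y _ => (Finset.sum_mul _ _ _).symm
      _ = ∑ b, ∑ y, pBY b y * Real.logb 2 (pBY b y) := by
          refine Finset.sum_congr rfl fun b _ => Finset.sum_congr rfl fun y _ => ?_
          rw [← hpBY]
  have E3 : ∑ a, ∑ b, ∑ x, ∑ y, Q a b x y * Real.logb 2 (pB b)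
      = ∑ b, pB b * Real.logb 2 (pB b) := by
    calc ∑ a, ∑ b, ∑ x, ∑ y, Q a b x y * Real.logb 2 (pB b)
        = ∑ a, ∑ b, pAB a b * Real.logb 2 (pB b) := by
          refine Finset.sum_congr rfl fun a _ => Finset.sum_congr rfl fun b _ => ?_
          calc ∑ x, ∑ y, Q a b x y * Real.logb 2 (pB b)
              = ∑ x, (∑ y, Q a b x y) * Real.logb 2 (pB b) :=
                Finset.sum_congr rfl fun x _ => (Finset.sum_mul _ _ _).symm
            _ = (∑ x, ∑ y, Q a b x y) * Real.logb 2 (pB b) := (Finset.sum_mul _ _ _).symm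
            _ = pAB a b * Real.logb 2 (pB b) := by rw [hQxy]
      _ = ∑ b, pB b * Real.logb 2 (pB b) := by
          rw [Finset.sum_comm]
          refine Finset.sum_congr rfl fun b _ => ?_
          rw [← Finset.sum_mul, ← hpB]
  have E4 : ∑ a, ∑ b, ∑ x, ∑ y, Q a b x y * Real.logb 2 (f a b x)
      = ∑ a, ∑ b, ∑ x, f a b x * Real.logb 2 (f a b x) := by
    refine Finset.sum_congr rfl fun a _ => Finset.sum_congr rfl fun b _ =>
      Finset.sum_congr rfl fun x _ => ?_
    rw [← Finset.sum_mul, hQy]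
  have E5 : ∑ a, ∑ b, ∑ x, ∑ y, Q a b x y * Real.logb 2 (g a b y)
      = ∑ a, ∑ b, ∑ y, g a b y * Real.logb 2 (g a b y) := by
    refine Finset.sum_congr rfl fun a _ => Finset.sum_congr rfl fun b _ => ?_
    rw [Finset.sum_comm]
    refine Finset.sum_congr rfl fun y _ => ?_
    rw [← Finset.sum_mul, hQx]
  have E6 : ∑ a, ∑ b, ∑ x, ∑ y, Q a b x y * Real.logb 2 (pAB a b)
      = ∑ a, ∑ b, pAB a b * Real.logb 2 (pAB a b) := by
    refine Finset.sum_congr rfl fun a _ => Finset.sum_congr rfl fun b _ => ?_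
    calc ∑ x, ∑ y, Q a b x y * Real.logb 2 (pAB a b)
        = ∑ x, (∑ y, Q a b x y) * Real.logb 2 (pAB a b) :=
          Finset.sum_congr rfl fun x _ => (Finset.sum_mul _ _ _).symm
      _ = (∑ x, ∑ y, Q a b x y) * Real.logb 2 (pAB a b) := (Finset.sum_mul _ _ _).symm
      _ = pAB a b * Real.logb 2 (pAB a b) := by rw [hQxy]
  -- main equality
  have hmain : ∑ a, ∑ b, ∑ x, ∑ y, Q a b x y * Real.logb 2 (G a b x y / Q a b x y)
      = (∑ b, ∑ x, pBX b x * Real.logb 2 (pBX b x))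
        + (∑ b, ∑ y, pBY b y * Real.logb 2 (pBY b y))
        - (∑ b, pB b * Real.logb 2 (pB b))
        - (∑ a, ∑ b, ∑ x, f a b x * Real.logb 2 (f a b x))
        - (∑ a, ∑ b, ∑ y, g a b y * Real.logb 2 (g a b y))
        + (∑ a, ∑ b, pAB a b * Real.logb 2 (pAB a b)) := by
    simp only [hpt, Finset.sum_add_distrib, Finset.sum_sub_distrib]
    rw [E1, E2, E3, E4, E5, E6]
  -- apply Gibbs
  have hgibbs := gibbs (ι := α × β × χ × υ)
    (fun i => Q i.1 i.2.1 i.2.2.1 i.2.2.2) (fun i => G i.1 i.2.1 i.2.2.1 i.2.2.2)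
    (fun i => hQnn _ _ _ _) (fun i => hGnn _ _ _ _) (fun i h => hQG _ _ _ _ h)
    (by
      simp only [Fintype.sum_prod_type]
      rw [hQtot]
      exact hGtot)
  simp only [Fintype.sum_prod_type] at hgibbs
  rw [hmain] at hgibbs
  linarith

/-- Generalized [KR11]: condition (C) on `(A,X,Y)` implies
`H(A|B,X) + H(A|B,Y) ≤ H(A|B)`. -/
theorem stmt_6 {Ω α β χ υ : Type*}
    [Fintype Ω] [Fintype α] [Fintype β] [Fintype χ] [Fintype υ]
    (p : Ω → ℝ) (hp : IsPMF p)
    (A : Ω → α) (B : Ω → β) (X : Ω → χ) (Y : Ω → υ)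
    (hC : ∀ (a a' : α) (x : χ) (y : υ),
      0 < pr p {ω | A ω = a ∧ X ω = x} →
      0 < pr p {ω | A ω = a ∧ Y ω = y} →
      0 < pr p {ω | A ω = a' ∧ X ω = x} →
      0 < pr p {ω | A ω = a' ∧ Y ω = y} → a = a') :
    condEnt p A (fun ω => (B ω, X ω)) + condEnt p A (fun ω => (B ω, Y ω)) ≤
      condEnt p A B := by
  classical
  have hpr_ite : ∀ (P : Ω → Prop) [DecidablePred P],
      pr p {ω | P ω} = ∑ ω, if P ω then p ω else 0 := by
    intro P _
    unfold pr
    refine Finset.sum_congr rfl fun ω _ => ?_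
    by_cases h : P ω <;> simp [Set.indicator_apply, Set.mem_setOf_eq, h]
  set f : α → β → χ → ℝ := fun a b x => pr p {ω | A ω = a ∧ B ω = b ∧ X ω = x} with hfdef
  set g : α → β → υ → ℝ := fun a b y => pr p {ω | A ω = a ∧ B ω = b ∧ Y ω = y} with hgdef
  set pAB : α → β → ℝ := fun a b => pr p {ω | A ω = a ∧ B ω = b} with hABdef
  set pBX : β → χ → ℝ := fun b x => pr p {ω | B ω = b ∧ X ω = x} with hBXdef
  set pBY : β → υ → ℝ := fun b y => pr p {ω | B ω = b ∧ Y ω = y} with hBYdef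
  set pB : β → ℝ := fun b => pr p {ω | B ω = b} with hBdef
  set pAX : α → χ → ℝ := fun a x => pr p {ω | A ω = a ∧ X ω = x} with hAXdef
  set pAY : α → υ → ℝ := fun a y => pr p {ω | A ω = a ∧ Y ω = y} with hAYdef
  have hf : ∀ a b x, 0 ≤ f a b x := by
    intro a b x
    rw [hfdef]; dsimp only; rw [hpr_ite]
    exact Finset.sum_nonneg fun ω _ => by split_ifs <;> [exact hp.1 ω; exact le_refl 0]
  have hg : ∀ a b y, 0 ≤ g a b y := by
    intro a b y
    rw [hgdef]; dsimp only; rw [hpr_ite]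
    exact Finset.sum_nonneg fun ω _ => by split_ifs <;> [exact hp.1 ω; exact le_refl 0]
  have hpABf : ∀ a b, pAB a b = ∑ x, f a b x := by
    intro a b
    simp only [hABdef, hfdef, hpr_ite]
    rw [Finset.sum_comm]
    refine Finset.sum_congr rfl fun ω _ => ?_
    by_cases h1 : A ω = a <;> by_cases h2 : B ω = b <;>
      simp [h1, h2, Finset.sum_ite_eq]
  have hpABg : ∀ a b, pAB a b = ∑ y, g a b y := by
    intro a b
    simp only [hABdef, hgdef, hpr_ite]
    rw [Finset.sum_comm]
    refine Finset.sum_congr rfl fun ω _ => ?_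
    by_cases h1 : A ω = a <;> by_cases h2 : B ω = b <;>
      simp [h1, h2, Finset.sum_ite_eq]
  have hpBX : ∀ b x, pBX b x = ∑ a, f a b x := by
    intro b x
    simp only [hBXdef, hfdef, hpr_ite]
    rw [Finset.sum_comm]
    refine Finset.sum_congr rfl fun ω _ => ?_
    by_cases h2 : B ω = b <;> by_cases h3 : X ω = x <;>
      simp [h2, h3, Finset.sum_ite_eq]
  have hpBY : ∀ b y, pBY b y = ∑ a, g a b y := by
    intro b y
    simp only [hBYdef, hgdef, hpr_ite]
    rw [Finset.sum_comm]
    refine Finset.sum_congr rfl fun ω _ => ?_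
    by_cases h2 : B ω = b <;> by_cases h3 : Y ω = y <;>
      simp [h2, h3, Finset.sum_ite_eq]
  have hpB : ∀ b, pB b = ∑ a, pAB a b := by
    intro b
    simp only [hBdef, hABdef, hpr_ite]
    rw [Finset.sum_comm]
    refine Finset.sum_congr rfl fun ω _ => ?_
    by_cases h2 : B ω = b <;> simp [h2, Finset.sum_ite_eq]
  have hpAX : ∀ a x, pAX a x = ∑ b, f a b x := by
    intro a x
    simp only [hAXdef, hfdef, hpr_ite]
    rw [Finset.sum_comm]
    refine Finset.sum_congr rfl fun ω _ => ?_
    by_cases h1 : A ω = a <;> by_cases h3 : X ω = x <;>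
      simp [h1, h3, Finset.sum_ite_eq]
  have hpAY : ∀ a y, pAY a y = ∑ b, g a b y := by
    intro a y
    simp only [hAYdef, hgdef, hpr_ite]
    rw [Finset.sum_comm]
    refine Finset.sum_congr rfl fun ω _ => ?_
    by_cases h1 : A ω = a <;> by_cases h3 : Y ω = y <;>
      simp [h1, h3, Finset.sum_ite_eq]
  have hC' : ∀ a a' x y, 0 < pAX a x → 0 < pAY a y → 0 < pAX a' x → 0 < pAY a' y → a = a' :=
    fun a a' x y h1 h2 h3 h4 => hC a a' x y h1 h2 h3 h4
  have KEY := key_ineq f g pAB pBX pBY pB pAX pAY hf hg hpABf hpABg hpBX hpBY hpB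
    hpAX hpAY hC'
  -- entropy expansions
  have hevABX : ∀ (a : α) (b : β) (x : χ), {ω | (A ω, B ω, X ω) = (a, b, x)}
      = {ω | A ω = a ∧ B ω = b ∧ X ω = x} := by
    intro a b x; ext ω; simp [Prod.ext_iff]
  have hevABY : ∀ (a : α) (b : β) (y : υ), {ω | (A ω, B ω, Y ω) = (a, b, y)}
      = {ω | A ω = a ∧ B ω = b ∧ Y ω = y} := by
    intro a b y; ext ω; simp [Prod.ext_iff]
  have hevBX : ∀ (b : β) (x : χ), {ω | (B ω, X ω) = (b, x)}
      = {ω | B ω = b ∧ X ω = x} := by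
    intro b x; ext ω; simp [Prod.ext_iff]
  have hevBY : ∀ (b : β) (y : υ), {ω | (B ω, Y ω) = (b, y)}
      = {ω | B ω = b ∧ Y ω = y} := by
    intro b y; ext ω; simp [Prod.ext_iff]
  have hevAB : ∀ (a : α) (b : β), {ω | (A ω, B ω) = (a, b)}
      = {ω | A ω = a ∧ B ω = b} := by
    intro a b; ext ω; simp [Prod.ext_iff]
  have eABX : ent p (fun ω => (A ω, (B ω, X ω)))
      = -∑ a, ∑ b, ∑ x, f a b x * Real.logb 2 (f a b x) := by
    unfold ent
    rw [Fintype.sum_prod_type]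
    congr 1
    refine Finset.sum_congr rfl fun a _ => ?_
    rw [Fintype.sum_prod_type]
    refine Finset.sum_congr rfl fun b _ => Finset.sum_congr rfl fun x _ => ?_
    rw [hfdef]; dsimp only; rw [hevABX]
  have eABY : ent p (fun ω => (A ω, (B ω, Y ω)))
      = -∑ a, ∑ b, ∑ y, g a b y * Real.logb 2 (g a b y) := by
    unfold ent
    rw [Fintype.sum_prod_type]
    congr 1
    refine Finset.sum_congr rfl fun a _ => ?_
    rw [Fintype.sum_prod_type]
    refine Finset.sum_congr rfl fun b _ => Finset.sum_congr rfl fun y _ => ?_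
    rw [hgdef]; dsimp only; rw [hevABY]
  have eBX : ent p (fun ω => (B ω, X ω))
      = -∑ b, ∑ x, pBX b x * Real.logb 2 (pBX b x) := by
    unfold ent
    rw [Fintype.sum_prod_type]
    congr 1
    refine Finset.sum_congr rfl fun b _ => Finset.sum_congr rfl fun x _ => ?_
    rw [hBXdef]; dsimp only; rw [hevBX]
  have eBY : ent p (fun ω => (B ω, Y ω))
      = -∑ b, ∑ y, pBY b y * Real.logb 2 (pBY b y) := by
    unfold ent
    rw [Fintype.sum_prod_type]
    congr 1
    refine Finset.sum_congr rfl fun b _ => Finset.sum_congr rfl fun y _ => ?_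
    rw [hBYdef]; dsimp only; rw [hevBY]
  have eAB : ent p (fun ω => (A ω, B ω))
      = -∑ a, ∑ b, pAB a b * Real.logb 2 (pAB a b) := by
    unfold ent
    rw [Fintype.sum_prod_type]
    congr 1
    refine Finset.sum_congr rfl fun a _ => Finset.sum_congr rfl fun b _ => ?_
    rw [hABdef]; dsimp only; rw [hevAB]
  have eB : ent p B = -∑ b, pB b * Real.logb 2 (pB b) := by
    unfold ent
    congr 1
  simp only [condEnt]
  rw [eABX, eABY, eBX, eBY, eAB, eB]
  linarith
end
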